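/- Let X be a real n×q matrix, Z a real m×q matrix, Q_R a real orthogonal m×m matrix, and D½ a real diagonal m×m matrix with nonnegative diagonal entries; set R = Q_R (D½)² Q_Rᵀ and suppose R_e := Z Zᵀ + R is invertible. Define K = (X Zᵀ) R_e⁻¹ and form the pre-array B = [ X − K Z , K Q_R D½ ] (horizontal concatenation, size n×(q+m)). Then B Bᵀ = X Xᵀ − K R_e Kᵀ; that is, B is a generalized square-root factor of the conventional posterior error covariance of the cubature Kalman filter measurement update. -/

import Mathlib

/-!
Because the gain satisfies `K R_e = X Zᵀ` and `R_e` is symmetric, both cross terms of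
`(X - K Z)(X - K Z)ᵀ` equal `K R_e Kᵀ`, so the Gram matrix of the pre-array is
`X Xᵀ - 2 K R_e Kᵀ + K (Z Zᵀ + R) Kᵀ = X Xᵀ - K R_e Kᵀ`, the second block contributing
`K Q_R D½ (K Q_R D½)ᵀ = K R Kᵀ`.
-/

open Matrix

namespace Matrix

variable {l m n p α : Type*} [Fintype m] [Fintype n] [Fintype p]

theorem fromCols_mul_transpose_fromCols [Semiring α]
    (A : Matrix l m α) (B : Matrix l n α) :
    fromCols A B * (fromCols A B)ᵀ = A * Aᵀ + B * Bᵀ := by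
  rw [transpose_fromCols, fromCols_mul_fromRows]

theorem mul_mul_transpose_mul [CommSemiring α] (A : Matrix l m α) (B : Matrix m n α) :
    A * B * (A * B)ᵀ = A * (B * Bᵀ) * Aᵀ := by
  simp only [transpose_mul, Matrix.mul_assoc]

theorem sub_mul_transpose_add_mul_mul_transpose [CommRing α]
    (X : Matrix l p α) (Z : Matrix m p α) (R : Matrix m m α) (K : Matrix l m α)
    (hR : R.IsSymm) (hK : K * (Z * Zᵀ + R) = X * Zᵀ) :
    (X - K * Z) * (X - K * Z)ᵀ + K * R * Kᵀ = X * Xᵀ - K * (Z * Zᵀ + R) * Kᵀ := by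
  set Re := Z * Zᵀ + R
  have hRe : Reᵀ = Re := by
    simp only [Re, transpose_add, transpose_mul, transpose_transpose, hR.eq]
  have hXZK : X * Zᵀ * Kᵀ = K * Re * Kᵀ := by rw [hK]
  have hKZX : K * Z * Xᵀ = K * Re * Kᵀ :=
    calc K * Z * Xᵀ = (X * Zᵀ * Kᵀ)ᵀ := by
          simp only [transpose_mul, transpose_transpose, Matrix.mul_assoc]
      _ = (K * Re * Kᵀ)ᵀ := by rw [hXZK]
      _ = K * Re * Kᵀ := by simp only [transpose_mul, transpose_transpose, hRe, Matrix.mul_assoc]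
  have hKReK : K * Re * Kᵀ = K * (Z * Zᵀ) * Kᵀ + K * R * Kᵀ := by
    rw [Matrix.mul_add, Matrix.add_mul]
  have expand : (X - K * Z) * (X - K * Z)ᵀ
      = X * Xᵀ - X * Zᵀ * Kᵀ - K * Z * Xᵀ + K * (Z * Zᵀ) * Kᵀ := by
    simp only [transpose_sub, transpose_mul, Matrix.sub_mul, Matrix.mul_sub, Matrix.mul_assoc]
    abel
  rw [expand, hXZK, hKZX, hKReK]
  abel

end Matrix

theorem posterior_pre_array_gram_general (n m q : ℕ)
    (X : Matrix (Fin n) (Fin q) ℝ) (Z : Matrix (Fin m) (Fin q) ℝ)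
    (QR Dhalf : Matrix (Fin m) (Fin m) ℝ)
    (hDhalf : Dhalf.IsDiag)
    (R : Matrix (Fin m) (Fin m) ℝ) (hR : R = QR * (Dhalf * Dhalf) * QRᵀ)
    (Re : Matrix (Fin m) (Fin m) ℝ) (hRe : Re = Z * Zᵀ + R)
    (hReInv : IsUnit Re)
    (K : Matrix (Fin n) (Fin m) ℝ) (hK : K = (X * Zᵀ) * Re⁻¹)
    (B : Matrix (Fin n) (Fin q ⊕ Fin m) ℝ)
    (hB : B = fromCols (X - K * Z) (K * QR * Dhalf)) :
    B * Bᵀ = X * Xᵀ - K * Re * Kᵀ := by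
  have hR_gram : R = QR * Dhalf * (QR * Dhalf)ᵀ := by
    rw [hR, mul_mul_transpose_mul, hDhalf.isSymm.eq]
  have hKRe : K * Re = X * Zᵀ := by
    rw [hK]
    exact nonsing_inv_mul_cancel_right Re _ ((isUnit_iff_isUnit_det Re).mp hReInv)
  have hR_symm : R.IsSymm := hR_gram ▸ isSymm_mul_transpose_self _
  rw [hRe] at hKRe ⊢
  rw [hB, fromCols_mul_transpose_fromCols, Matrix.mul_assoc K, mul_mul_transpose_mul, ← hR_gram]
  exact sub_mul_transpose_add_mul_mul_transpose X Z R K hR_symm hKRe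

/-- The posterior pre-array `B = [X − K Z, K Q_R D½]` satisfies
`B Bᵀ = X Xᵀ − K R_e Kᵀ`. -/
theorem posterior_pre_array_gram (n m q : ℕ)
    (X : Matrix (Fin n) (Fin q) ℝ) (Z : Matrix (Fin m) (Fin q) ℝ)
    (QR Dhalf : Matrix (Fin m) (Fin m) ℝ)
    (hQR : QRᵀ * QR = 1) (hDhalf : Dhalf.IsDiag) (hDpos : ∀ i, 0 ≤ Dhalf i i)
    (R : Matrix (Fin m) (Fin m) ℝ) (hR : R = QR * (Dhalf * Dhalf) * QRᵀ)
    (Re : Matrix (Fin m) (Fin m) ℝ) (hRe : Re = Z * Zᵀ + R)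
    (hReInv : IsUnit Re)
    (K : Matrix (Fin n) (Fin m) ℝ) (hK : K = (X * Zᵀ) * Re⁻¹)
    (B : Matrix (Fin n) (Fin q ⊕ Fin m) ℝ)
    (hB : B = fromCols (X - K * Z) (K * QR * Dhalf)) :
    B * Bᵀ = X * Xᵀ - K * Re * Kᵀ :=
  posterior_pre_array_gram_general n m q X Z QR Dhalf hDhalf R hR Re hRe hReInv K hK B hB
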